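/- With X, the basis {e_k; f_k}, Q_n, and Φ_r as above (‖R_n‖ = 1 for all n), one has Q_n Φ_r(x) = Φ_r(Q_n x) for every x ∈ X and every n ∈ ℕ. -/

import Mathlib

/-!
Since `f_k (Q_n x)` is `f_k x` for `k ≥ n` and `0` otherwise, and `Q_k Q_n = Q_k` for `k ≥ n`,
`Q_n` maps each partial sum of the series defining `Φ_r(x)` to the corresponding partial sum
of the series defining `Φ_r(Q_n x)`. Continuity of `Q_n` and uniqueness of limits finish.
-/

open Filter Finset Topology

/-- The tail projection `Q_{n+1} = I - P_n` associated to a Schauder basis system,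
where `P_n x = ∑_{k<n} f_k(x) e_k`.  Thus `tailProj f e n` is the paper's `Q_{n+1}`
and also its `R_n`. -/
noncomputable def tailProj {X : Type*} [NormedAddCommGroup X] [NormedSpace ℝ X]
    (f : ℕ → X →L[ℝ] ℝ) (e : ℕ → X) (n : ℕ) : X →L[ℝ] X :=
  ContinuousLinearMap.id ℝ X - ∑ k ∈ Finset.range n, (f k).smulRight (e k)

/-- The piecewise-linear cutoff function `φ_r`: equal to `1` on `[-r, r]`,
`0` outside `(-2r, 2r)`, and `2 - |t|/r` in between. -/
noncomputable def phi (r t : ℝ) : ℝ :=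
  if |t| ≤ r then 1 else if |t| ≤ 2 * r then 2 - |t| / r else 0

section TailProj

variable {X : Type*} [NormedAddCommGroup X] [NormedSpace ℝ X] (f : ℕ → X →L[ℝ] ℝ) (e : ℕ → X)

lemma tailProj_apply (n : ℕ) (x : X) :
    tailProj f e n x = x - ∑ k ∈ range n, f k x • e k := by
  simp [tailProj]

lemma coord_tailProj_of_le (hbi : ∀ k j, f k (e j) = if k = j then (1 : ℝ) else 0)
    {n k : ℕ} (hnk : n ≤ k) (x : X) : f k (tailProj f e n x) = f k x := by
  simp [tailProj_apply, hbi, hnk]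

lemma coord_tailProj_of_lt (hbi : ∀ k j, f k (e j) = if k = j then (1 : ℝ) else 0)
    {n k : ℕ} (hkn : k < n) (x : X) : f k (tailProj f e n x) = 0 := by
  simp [tailProj_apply, hbi, hkn]

lemma tailProj_basis_of_le (hbi : ∀ k j, f k (e j) = if k = j then (1 : ℝ) else 0)
    {n k : ℕ} (hnk : n ≤ k) : tailProj f e n (e k) = e k := by
  simp [tailProj_apply, hbi, ite_smul, Finset.sum_ite_eq', hnk]

lemma tailProj_basis_of_lt (hbi : ∀ k j, f k (e j) = if k = j then (1 : ℝ) else 0)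
    {n k : ℕ} (hkn : k < n) : tailProj f e n (e k) = 0 := by
  simp [tailProj_apply, hbi, ite_smul, Finset.sum_ite_eq', hkn]

lemma tailProj_tailProj_of_le (hbi : ∀ k j, f k (e j) = if k = j then (1 : ℝ) else 0)
    {n m : ℕ} (hnm : n ≤ m) (x : X) :
    tailProj f e m (tailProj f e n x) = tailProj f e m x := by
  have hsplit : ∑ k ∈ range m, f k (tailProj f e n x) • e k
      = ∑ k ∈ Ico n m, f k x • e k := by
    rw [← sum_range_add_sum_Ico _ hnm,
      sum_congr rfl fun k hk => by rw [coord_tailProj_of_lt f e hbi (mem_range.1 hk), zero_smul],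
      sum_const_zero, zero_add]
    exact sum_congr rfl fun k hk => by rw [coord_tailProj_of_le f e hbi (mem_Ico.1 hk).1]
  rw [tailProj_apply, hsplit, tailProj_apply, tailProj_apply, sub_sub,
    sum_range_add_sum_Ico _ hnm]

lemma tailProj_sum_weighted_coord (hbi : ∀ k j, f k (e j) = if k = j then (1 : ℝ) else 0)
    (φ : ℝ → ℝ) (n m : ℕ) (x : X) :
    tailProj f e n (∑ k ∈ range m, φ ‖tailProj f e k x‖ • (f k x • e k))
      = ∑ k ∈ range m,
          φ ‖tailProj f e k (tailProj f e n x)‖ • (f k (tailProj f e n x) • e k) := by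
  rw [map_sum]
  refine sum_congr rfl fun k _ => ?_
  rcases lt_or_ge k n with hkn | hnk
  · simp [tailProj_basis_of_lt f e hbi hkn, coord_tailProj_of_lt f e hbi hkn]
  · rw [map_smul, map_smul, tailProj_basis_of_le f e hbi hnk, coord_tailProj_of_le f e hbi hnk,
      tailProj_tailProj_of_le f e hbi hnk]

end TailProj

theorem Phi_commutes_with_tails_general
    {X : Type*} [NormedAddCommGroup X] [NormedSpace ℝ X]
    (e : ℕ → X) (f : ℕ → X →L[ℝ] ℝ)
    (hbi : ∀ k j, f k (e j) = if k = j then (1 : ℝ) else 0)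
    (r : ℝ) (Φ : X → X)
    (hΦ : ∀ x : X, Tendsto
      (fun n => ∑ k ∈ Finset.range n, phi r ‖tailProj f e k x‖ • (f k x • e k))
      atTop (𝓝 (Φ x)))
    (x : X) (n : ℕ) :
    tailProj f e n (Φ x) = Φ (tailProj f e n x) := by
  have hlim := ((tailProj f e n).continuous.tendsto _).comp (hΦ x)
  simp only [Function.comp_def, tailProj_sum_weighted_coord f e hbi] at hlim
  exact tendsto_nhds_unique hlim (hΦ (tailProj f e n x))

/-- `Q_n Φ_r(x) = Φ_r(Q_n x)` for every `x ∈ X` and every `n`. -/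
theorem Phi_commutes_with_tails
    {X : Type*} [NormedAddCommGroup X] [NormedSpace ℝ X] [CompleteSpace X]
    (e : ℕ → X) (f : ℕ → X →L[ℝ] ℝ)
    (hexp : ∀ x : X, Tendsto (fun n => ∑ k ∈ Finset.range n, f k x • e k) atTop (𝓝 x))
    (hbi : ∀ k j, f k (e j) = if k = j then (1 : ℝ) else 0)
    (hR : ∀ n, 1 ≤ n → ‖tailProj f e n‖ = 1)
    (r : ℝ) (hr : 0 < r) (Φ : X → X)
    (hΦ : ∀ x : X, Tendsto
      (fun n => ∑ k ∈ Finset.range n, phi r ‖tailProj f e k x‖ • (f k x • e k))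
      atTop (𝓝 (Φ x)))
    (x : X) (n : ℕ) :
    tailProj f e n (Φ x) = Φ (tailProj f e n x) :=
  Phi_commutes_with_tails_general e f hbi r Φ hΦ x n
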